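/- For any n-bit partial function f and any positive integer m, R₀(f^{⊕m}) = m · R₀(f). Moreover, if μ is a hard distribution for f, then μ^{⊗m} is a hard distribution for f^{⊕m}: every zero-error randomized algorithm for f^{⊕m} makes at least m · R₀(f) expected queries on inputs drawn from μ^{⊗m}. Similarly, for every ε ∈ [0, 1/2), R̄_ε(f^{⊕m}) ≥ m · R̄_ε(f). -/

import Mathlib

/-!
Upper bound: running an optimal zero-error algorithm for `f` independently on the `m` blocks
computes `f^{⊕m}` without error, and the expected costs add up.

Lower bound: let `A` compute `f^{⊕m}` with error `ε` and let `μ` be a distribution on the domain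
of `f`. Planting the input in block `i` and filling the other blocks with independent samples of
`μ` turns `A` into an algorithm for `f` with error `ε`, whose expected cost on `x ~ μ` is the
expected number of queries `A` makes to block `i` on `μ^{⊗m}`. Summing over `i`, the expected
cost of `A` on `μ^{⊗m}` is at least `m` times the expected cost of any `ε`-error algorithm for
`f` on `μ`. For a hard `μ` this is `m · R̄_ε(f)`; such a `μ` exists by Yao's principle, obtained
by separating (Hahn–Banach) the convex set of expected-cost vectors of `ε`-error algorithms from
the open set of vectors lying below `R̄_ε(f)` on the domain.
-/

/-! ### Decision trees -/

/-- A deterministic decision tree querying positions of type `ι`, receiving answers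
in `α`, and producing an output in `β`. -/
inductive DTree (ι α β : Type) : Type
  | leaf (b : β) : DTree ι α β
  | node (i : ι) (next : α → DTree ι α β) : DTree ι α β

namespace DTree

variable {ι α β : Type}

/-- The output of a decision tree on input `x`. -/
def output : DTree ι α β → (ι → α) → β
  | leaf b, _ => b
  | node i next, x => (next (x i)).output x

/-- The number of queries made by a decision tree on input `x`. -/
def cost : DTree ι α β → (ι → α) → ℕ
  | leaf _, _ => 0
  | node i next, x => (next (x i)).cost x + 1

/-- The set of positions queried by a decision tree on input `x`. -/
def queries : DTree ι α β → (ι → α) → Set ι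
  | leaf _, _ => ∅
  | node i next, x => insert i ((next (x i)).queries x)

end DTree

/-- A partial function on inputs `ι → α` with outputs in `β`; `none` means undefined
(the domain is the set of inputs mapped to `some` value). -/
abbrev PFn (ι α β : Type) := (ι → α) → Option β

/-- `t` computes the partial function `f` (correct on every input of the domain). -/
def DTree.computesP {ι α β : Type} (t : DTree ι α β) (f : PFn ι α β) : Prop :=
  ∀ x b, f x = some b → t.output x = b

/-- Deterministic query complexity `D(f)`. -/
noncomputable def Dq {ι α β : Type} (f : PFn ι α β) : ℝ :=
  sInf {T : ℝ | 0 ≤ T ∧ ∃ t : DTree ι α β, t.computesP f ∧ ∀ x, (t.cost x : ℝ) ≤ T}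

/-! ### Randomized query algorithms -/

/-- A randomized query algorithm: a finitely supported probability distribution over
deterministic decision trees. -/
structure RandAlg (ι α β : Type) where
  Ω : Type
  [fin : Fintype Ω]
  p : Ω → ℝ
  nonneg : ∀ ω, 0 ≤ p ω
  sum_one : ∑ ω, p ω = 1
  tree : Ω → DTree ι α β

namespace RandAlg

variable {ι α β : Type}

/-- Expected number of queries of `A` on input `x`. -/
noncomputable def expCost (A : RandAlg ι α β) (x : ι → α) : ℝ :=
  letI := A.fin
  ∑ ω, A.p ω * ((A.tree ω).cost x : ℝ)

open Classical in
/-- Probability that `A` outputs `b` on input `x`. -/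
noncomputable def succProb (A : RandAlg ι α β) (x : ι → α) (b : β) : ℝ :=
  letI := A.fin
  ∑ ω, if (A.tree ω).output x = b then A.p ω else 0

/-- `A` computes `f` with error at most `ε`: on every input of the domain the correct
output is produced with probability at least `1 - ε`. -/
def Computes (A : RandAlg ι α β) (f : PFn ι α β) (ε : ℝ) : Prop :=
  ∀ x b, f x = some b → 1 - ε ≤ A.succProb x b

/-- The worst-case cost of `A` (over all inputs and all trees in the support) is at most `T`. -/
def WCostLe (A : RandAlg ι α β) (T : ℝ) : Prop :=
  ∀ ω, A.p ω ≠ 0 → ∀ x, ((A.tree ω).cost x : ℝ) ≤ T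

/-- The expected cost of `A` on every input of the domain of `f` is at most `T`. -/
def ECostLe (A : RandAlg ι α β) (f : PFn ι α β) (T : ℝ) : Prop :=
  ∀ x, (f x).isSome → A.expCost x ≤ T

end RandAlg

/-- `R_ε(f)`: minimum worst-case cost of an `ε`-error randomized algorithm for `f`. -/
noncomputable def Rw {ι α β : Type} (ε : ℝ) (f : PFn ι α β) : ℝ :=
  sInf {T : ℝ | 0 ≤ T ∧ ∃ A : RandAlg ι α β, A.Computes f ε ∧ A.WCostLe T}

/-- `R̄_ε(f)`: minimum expected cost of an `ε`-error randomized algorithm for `f`. -/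
noncomputable def Rbar {ι α β : Type} (ε : ℝ) (f : PFn ι α β) : ℝ :=
  sInf {T : ℝ | 0 ≤ T ∧ ∃ A : RandAlg ι α β, A.Computes f ε ∧ A.ECostLe f T}

/-- `R₀(f)`: zero-error expected randomized query complexity. -/
noncomputable def R0 {ι α β : Type} (f : PFn ι α β) : ℝ := Rbar 0 f

/-- `R(f) := R_{1/3}(f)`: bounded-error randomized query complexity. -/
noncomputable def Rb {ι α β : Type} (f : PFn ι α β) : ℝ := Rw (1/3) f

/-- The total function `f` viewed as a partial function. -/
def tot {ι α β : Type} (f : (ι → α) → β) : PFn ι α β := fun x => some (f x)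

/-! ### Direct sums, distributions, and certificates -/

open Classical in
/-- The `m`-fold direct sum `f^{⊕m}`: given `m` independent inputs to `f`, output the
tuple of the `m` values of `f`. -/
noncomputable def dsum {ι α β : Type} (m : ℕ) (f : PFn ι α β) :
    PFn (Fin m × ι) α (Fin m → β) :=
  fun x =>
    if h : ∀ i : Fin m, (f fun j => x (i, j)).isSome then
      some fun i => (f fun j => x (i, j)).get (h i)
    else none

/-- A finitely supported probability distribution. -/
structure FinDist (γ : Type) where
  support : Finset γ
  p : γ → ℝ
  nonneg : ∀ z, 0 ≤ p z
  zero_off : ∀ z ∉ support, p z = 0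
  sum_one : ∑ z ∈ support, p z = 1

/-- `μ` is a hard distribution for `f` (as given by Yao's minimax theorem): it is
supported on the domain of `f` and every zero-error randomized algorithm for `f` makes
at least `R₀(f)` expected queries on inputs drawn from `μ`. -/
def IsHardDist {ι α β : Type} (μ : FinDist (ι → α)) (f : PFn ι α β) : Prop :=
  (∀ x ∈ μ.support, (f x).isSome) ∧
  ∀ A : RandAlg ι α β, A.Computes f 0 →
    R0 f ≤ ∑ x ∈ μ.support, μ.p x * A.expCost x

/-- `S` is a certificate for `f` at `x`: `x` is in the domain of `f` and the values of
`x` on `S` determine the value of `f` on every domain input consistent with them. -/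
def IsCert {ι α β : Type} (f : PFn ι α β) (S : Set ι) (x : ι → α) : Prop :=
  (f x).isSome ∧ ∀ y, (f y).isSome → (∀ i ∈ S, y i = x i) → f y = f x

/-- The tree `t`, run on the direct-sum input `z`, solves the `i`-th instance of `f` if
the positions of the `i`-th instance it queries form a certificate for that instance. -/
def SolvesInstance {m : ℕ} {ι α β γ : Type} (f : PFn ι α β)
    (t : DTree (Fin m × ι) α γ) (z : Fin m × ι → α) (i : Fin m) : Prop :=
  IsCert f {j | (i, j) ∈ t.queries z} fun j => z (i, j)

open Classical in
/-- The number of the `m` instances solved by `t` on the direct-sum input `z`. -/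
noncomputable def solvedCount {m : ℕ} {ι α β γ : Type} (f : PFn ι α β)
    (t : DTree (Fin m × ι) α γ) (z : Fin m × ι → α) : ℕ :=
  (Finset.univ.filter fun i : Fin m => SolvesInstance f t z i).card

/-- Expected number of instances of `f` solved by the randomized algorithm `A` on the
direct-sum input `z`. -/
noncomputable def RandAlg.expSolved {m : ℕ} {ι α β γ : Type}
    (A : RandAlg (Fin m × ι) α γ) (f : PFn ι α β) (z : Fin m × ι → α) : ℝ :=
  letI := A.fin
  ∑ ω, A.p ω * (solvedCount f (A.tree ω) z : ℝ)

open Classical in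
/-- Probability that the positions queried by `A` on `x` form a certificate for `f`. -/
noncomputable def RandAlg.certProb {ι α β γ : Type} (A : RandAlg ι α γ)
    (f : PFn ι α β) (x : ι → α) : ℝ :=
  letI := A.fin
  ∑ ω, if IsCert f ((A.tree ω).queries x) x then A.p ω else 0

attribute [instance] RandAlg.fin

theorem nonpos_of_forall_add_mul_lt {a b u : ℝ} (h : ∀ t : ℝ, 0 ≤ t → a + t * b < u) : b ≤ 0 := by
  by_contra! hb
  have hu : 0 ≤ u - a := by linarith [h 0 le_rfl]
  have := h ((u - a) / b) (div_nonneg hu hb.le)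
  rw [div_mul_cancel₀ _ hb.ne'] at this
  linarith

theorem exists_nonneg_forall_mul_sum_lt {V : Type*} [Fintype V] {K : Set (V → ℝ)}
    (hKc : Convex ℝ K) {s : Set V} {v : ℝ} (hv : ∀ c ∈ K, ∃ x ∈ s, v ≤ c x) :
    ∃ lam : V → ℝ, (∀ x, 0 ≤ lam x) ∧ (∀ x ∉ s, lam x = 0) ∧
      ∀ c ∈ K, ∀ r < v, r * ∑ x, lam x < ∑ x, c x * lam x := by
  classical
  set U : Set (V → ℝ) := ⋂ x ∈ s, {c | c x < v}
  have mem_U {c : V → ℝ} : c ∈ U ↔ ∀ x ∈ s, c x < v := Set.mem_iInter₂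
  have hUc : Convex ℝ U :=
    convex_iInter₂ fun x _ => convex_halfSpace_lt ⟨fun _ _ => rfl, fun _ _ => rfl⟩ v
  have hUo : IsOpen U :=
    s.toFinite.isOpen_biInter fun x _ => isOpen_lt (continuous_apply x) continuous_const
  have hUK : Disjoint U K := Set.disjoint_left.2 fun c hcU hcK => by
    obtain ⟨x, hx, hvx⟩ := hv c hcK
    exact (mem_U.1 hcU x hx).not_ge hvx
  obtain ⟨F, u, hFU, hFK⟩ := geometric_hahn_banach_open hUc hUo hKc hUK
  set e : V → V → ℝ := fun x j => if x = j then 1 else 0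
  set lam : V → ℝ := fun x => F (e x)
  have hF (c : V → ℝ) : F c = ∑ x, c x * lam x :=
    LinearMap.pi_apply_eq_sum_univ (F : (V → ℝ) →L[ℝ] ℝ).toLinearMap c
  -- `F` is bounded above on `U`, which contains the rays from `v - 1` in the directions
  -- `-e x`, and also `e x` when `x ∉ s`.
  have hray (x : V) (d : ℝ) (hd : ∀ t : ℝ, 0 ≤ t → (fun _ => v - 1) + (t * d) • e x ∈ U) :
      d * lam x ≤ 0 :=
    nonpos_of_forall_add_mul_lt (a := F fun _ => v - 1) fun t ht => by
      simpa [mul_assoc] using hFU _ (hd t ht)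
  have hlam_nonneg (x : V) : 0 ≤ lam x := by
    have hd : ∀ t : ℝ, 0 ≤ t → (fun _ => v - 1) + (t * -1) • e x ∈ U := fun t ht =>
      mem_U.2 fun j _ => by
        by_cases hj : x = j
        · simp [e, hj]; linarith
        · simp [e, hj]
    simpa using hray x (-1) hd
  have hlam_zero (x : V) (hx : x ∉ s) : lam x = 0 := by
    have hd : ∀ t : ℝ, 0 ≤ t → (fun _ => v - 1) + (t * 1) • e x ∈ U := fun t _ =>
      mem_U.2 fun j hj => by simp [e, show x ≠ j from fun h => hx (h ▸ hj)]
    exact le_antisymm (by simpa using hray x 1 hd) (hlam_nonneg x)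
  refine ⟨lam, hlam_nonneg, hlam_zero, fun c hc r hr => ?_⟩
  have := (hFU (fun _ => r) (mem_U.2 fun _ _ => hr)).trans_le (hFK c hc)
  simpa [hF, ← Finset.mul_sum] using this

theorem exists_mem_stdSimplex_forall_le_sum_mul {V : Type*} [Fintype V] {K : Set (V → ℝ)}
    (hKc : Convex ℝ K) (hKne : K.Nonempty) {s : Set V} {v : ℝ}
    (hv : ∀ c ∈ K, ∃ x ∈ s, v ≤ c x) :
    ∃ w ∈ stdSimplex ℝ V, (∀ x ∉ s, w x = 0) ∧ ∀ c ∈ K, v ≤ ∑ x, w x * c x := by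
  obtain ⟨lam, hlam_nonneg, hlam_zero, hlt⟩ := exists_nonneg_forall_mul_sum_lt hKc hv
  obtain ⟨c₀, hc₀⟩ := hKne
  set S := ∑ x, lam x
  have hS : 0 < S := by
    refine (Finset.sum_nonneg fun x _ => hlam_nonneg x).lt_of_ne fun hS => ?_
    have hzero := (Finset.sum_eq_zero_iff_of_nonneg fun x _ => hlam_nonneg x).1 hS.symm
    have := hlt c₀ hc₀ (v - 1) (by linarith)
    simp [S, hzero] at this
  refine ⟨fun x => lam x / S, ⟨fun x => div_nonneg (hlam_nonneg x) hS.le, ?_⟩,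
    fun x hx => by simp [hlam_zero x hx], fun c hc => le_of_forall_lt fun r hr => ?_⟩
  · rw [← Finset.sum_div, div_self hS.ne']
  · simp_rw [div_mul_eq_mul_div, ← Finset.sum_div, mul_comm (lam _)]
    exact (lt_div_iff₀ hS).2 (hlt c hc r hr)

namespace DTree

variable {ι κ α β γ : Type}

def bind : DTree ι α β → (β → DTree ι α γ) → DTree ι α γ
  | leaf b, k => k b
  | node i next, k => node i fun a => (next a).bind k

@[simp]
theorem output_bind (t : DTree ι α β) (k : β → DTree ι α γ) (x : ι → α) :
    (t.bind k).output x = (k (t.output x)).output x := by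
  induction t with
  | leaf b => rfl
  | node i next ih => exact ih (x i)

@[simp]
theorem cost_bind (t : DTree ι α β) (k : β → DTree ι α γ) (x : ι → α) :
    (t.bind k).cost x = t.cost x + (k (t.output x)).cost x := by
  induction t with
  | leaf b => simp [bind, cost, output]
  | node i next ih => simp only [bind, cost, output, ih]; ring

def reindex (e : ι → κ) : DTree ι α β → DTree κ α β
  | leaf b => leaf b
  | node i next => node (e i) fun a => (next a).reindex e

@[simp]
theorem output_reindex (e : ι → κ) (t : DTree ι α β) (z : κ → α) :
    (t.reindex e).output z = t.output (z ∘ e) := by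
  induction t with
  | leaf b => rfl
  | node i next ih => exact ih _

@[simp]
theorem cost_reindex (e : ι → κ) (t : DTree ι α β) (z : κ → α) :
    (t.reindex e).cost z = t.cost (z ∘ e) := by
  induction t with
  | leaf b => rfl
  | node i next ih => simp [reindex, cost, ih]

theorem nonempty [Nonempty α] : DTree ι α β → Nonempty β
  | leaf b => ⟨b⟩
  | node _ next => (next (Classical.arbitrary α)).nonempty

section queryAll

variable [DecidableEq ι]

def queryAll (g : (ι → α) → β) : List ι → (ι → α) → DTree ι α β
  | [], x => leaf (g x)
  | i :: l, x => node i fun a => queryAll g l (Function.update x i a)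

theorem output_queryAll (g : (ι → α) → β) (l : List ι) (x y : ι → α)
    (h : ∀ j ∉ l, x j = y j) : (queryAll g l x).output y = g y := by
  induction l generalizing x with
  | nil => exact congrArg g (funext fun j => h j List.not_mem_nil)
  | cons i l ih =>
    refine ih _ fun j hj => ?_
    by_cases hji : j = i
    · simp [hji]
    · simpa [hji] using h j (by simp [hji, hj])

theorem cost_queryAll (g : (ι → α) → β) (l : List ι) (x y : ι → α) :
    (queryAll g l x).cost y = l.length := by
  induction l generalizing x with
  | nil => rfl
  | cons i l ih => simp [queryAll, cost, ih]

end queryAll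

section blocks

variable [DecidableEq κ]

def seq (ts : κ → DTree ι α β) : List κ → (κ → β) → DTree (κ × ι) α (κ → β)
  | [], acc => leaf acc
  | i :: l, acc => ((ts i).reindex (i, ·)).bind fun b => seq ts l (Function.update acc i b)

theorem output_seq (ts : κ → DTree ι α β) (l : List κ) (acc : κ → β) (z : κ × ι → α) :
    (seq ts l acc).output z
      = fun i => if i ∈ l then (ts i).output (Function.curry z i) else acc i := by
  induction l generalizing acc with
  | nil => simp [seq, output]
  | cons i l ih =>
    funext j
    by_cases hj : j = i
    · subst hj
      by_cases hl : j ∈ l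
      · simp [seq, ih, hl]
      · simp [seq, ih, hl, Function.comp_def]; rfl
    · simp [seq, ih, hj]

theorem cost_seq (ts : κ → DTree ι α β) (l : List κ) (acc : κ → β) (z : κ × ι → α) :
    (seq ts l acc).cost z = (l.map fun i => (ts i).cost (Function.curry z i)).sum := by
  induction l generalizing acc with
  | nil => rfl
  | cons i l ih => simp [seq, ih, Function.comp_def]; rfl

def costAt (i : κ) : DTree (κ × ι) α β → (κ × ι → α) → ℕ
  | leaf _, _ => 0
  | node q next, z => (next (z q)).costAt i z + if q.1 = i then 1 else 0

theorem sum_costAt [Fintype κ] (t : DTree (κ × ι) α β) (z : κ × ι → α) :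
    ∑ i, t.costAt i z = t.cost z := by
  induction t with
  | leaf b => simp [costAt, cost]
  | node q next ih => simp [costAt, cost, Finset.sum_add_distrib, ih]

def restrict (i : κ) (y : κ → ι → α) : DTree (κ × ι) α β → DTree ι α β
  | leaf b => leaf b
  | node q next =>
    if q.1 = i then node q.2 fun a => (next a).restrict i y
    else (next (y q.1 q.2)).restrict i y

theorem output_restrict (i : κ) (y : κ → ι → α) (t : DTree (κ × ι) α β) (x : ι → α) :
    (t.restrict i y).output x = t.output (Function.uncurry (Function.update y i x)) := by
  induction t with
  | leaf b => rfl
  | node q next ih =>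
    obtain ⟨i', j⟩ := q
    by_cases hi : i' = i
    · subst hi
      simp [restrict, output, ih]
    · simp [restrict, hi, output, ih]

theorem cost_restrict (i : κ) (y : κ → ι → α) (t : DTree (κ × ι) α β) (x : ι → α) :
    (t.restrict i y).cost x = t.costAt i (Function.uncurry (Function.update y i x)) := by
  induction t with
  | leaf b => rfl
  | node q next ih =>
    obtain ⟨i', j⟩ := q
    by_cases hi : i' = i
    · subst hi
      simp [restrict, cost, costAt, ih]
    · simp [restrict, hi, costAt, ih]

end blocks

end DTree

section productWeights

variable {κ S : Type} [Fintype κ] [DecidableEq κ] [Fintype S] {w : S → ℝ}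

theorem sum_prod_eq_one (hw : ∑ s, w s = 1) : ∑ y : κ → S, ∏ j, w (y j) = 1 := by
  rw [← Fintype.prod_sum]
  simp [hw]

/-- Resampling one coordinate of a sample of the product weights `w^κ` does not change its law. -/
theorem sum_mul_sum_prod_mul_update (hw : ∑ s, w s = 1) (i : κ) (C : (κ → S) → ℝ) :
    ∑ x, w x * ∑ y : κ → S, (∏ j, w (y j)) * C (Function.update y i x)
      = ∑ y : κ → S, (∏ j, w (y j)) * C y := by
  have hweight (x : S) (y : κ → S) :
      w x * ∏ j, w (y j) = w (y i) * ∏ j, w (Function.update y i x j) := by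
    rw [Fintype.prod_eq_mul_prod_compl i, Fintype.prod_eq_mul_prod_compl i (fun j => w _),
      Function.update_self, Finset.prod_congr rfl fun j hj =>
        congrArg w (Function.update_of_ne (by simpa using hj) x y)]
    ring
  let e : S × (κ → S) ≃ S × (κ → S) :=
    Function.Involutive.toPerm (fun p => (p.2 i, Function.update p.2 i p.1)) fun p => by simp
  calc ∑ x, w x * ∑ y : κ → S, (∏ j, w (y j)) * C (Function.update y i x)
      = ∑ p : S × (κ → S), w (e p).1 * ((∏ j, w ((e p).2 j)) * C (e p).2) := by
        rw [Fintype.sum_prod_type]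
        refine Finset.sum_congr rfl fun x _ => ?_
        rw [Finset.mul_sum]
        refine Finset.sum_congr rfl fun y _ => ?_
        rw [← mul_assoc, hweight, mul_assoc]
        rfl
    _ = ∑ p : S × (κ → S), w p.1 * ((∏ j, w (p.2 j)) * C p.2) :=
        e.sum_comp fun p => w p.1 * ((∏ j, w (p.2 j)) * C p.2)
    _ = ∑ y : κ → S, (∏ j, w (y j)) * C y := by
        simp_rw [Fintype.sum_prod_type, ← Finset.mul_sum, ← Finset.sum_mul, hw, one_mul]

theorem sum_prod_mul_apply (hw : ∑ s, w s = 1) (i : κ) (h : S → ℝ) :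
    ∑ y : κ → S, (∏ j, w (y j)) * h (y i) = ∑ x, w x * h x := by
  simpa [← Finset.mul_sum, ← Finset.sum_mul, sum_prod_eq_one hw] using
    (sum_mul_sum_prod_mul_update hw i fun y => h (y i)).symm

end productWeights

namespace RandAlg

variable {ι α β : Type}

noncomputable def expect (A : RandAlg ι α β) (F : DTree ι α β → ℝ) : ℝ :=
  ∑ ω, A.p ω * F (A.tree ω)

theorem expCost_eq_expect (A : RandAlg ι α β) (x : ι → α) :
    A.expCost x = A.expect fun t => t.cost x :=
  rfl

open Classical in
theorem succProb_eq_expect (A : RandAlg ι α β) (x : ι → α) (b : β) :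
    A.succProb x b = A.expect fun t => if t.output x = b then 1 else 0 := by
  simp [succProb, expect]

theorem expect_mono (A : RandAlg ι α β) {F G : DTree ι α β → ℝ} (h : ∀ t, F t ≤ G t) :
    A.expect F ≤ A.expect G :=
  Finset.sum_le_sum fun ω _ => mul_le_mul_of_nonneg_left (h _) (A.nonneg ω)

theorem expCost_nonneg (A : RandAlg ι α β) (x : ι → α) : 0 ≤ A.expCost x :=
  Finset.sum_nonneg fun ω _ => mul_nonneg (A.nonneg ω) (Nat.cast_nonneg _)

theorem nonempty [Nonempty α] (A : RandAlg ι α β) : Nonempty β := by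
  obtain ⟨ω⟩ : Nonempty A.Ω := by
    by_contra h
    simpa [not_nonempty_iff.1 h] using A.sum_one
  exact (A.tree ω).nonempty

theorem Computes.mono {A : RandAlg ι α β} {f : PFn ι α β} {ε ε' : ℝ} (h : A.Computes f ε)
    (hε : ε ≤ ε') : A.Computes f ε' :=
  fun x b hx => (h x b hx).trans' (by linarith)

noncomputable def pure (t : DTree ι α β) : RandAlg ι α β :=
  ⟨Unit, fun _ => 1, fun _ => zero_le_one, by simp, fun _ => t⟩

@[simp]
theorem expect_pure (t : DTree ι α β) (F : DTree ι α β → ℝ) : (pure t).expect F = F t := by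
  show ∑ _ : Unit, 1 * F t = F t
  simp

noncomputable def mix (A B : RandAlg ι α β) {a b : ℝ} (ha : 0 ≤ a) (hb : 0 ≤ b)
    (hab : a + b = 1) : RandAlg ι α β where
  Ω := A.Ω ⊕ B.Ω
  p := Sum.elim (fun ω => a * A.p ω) fun ω => b * B.p ω
  nonneg := by
    rintro (ω | ω)
    exacts [mul_nonneg ha (A.nonneg ω), mul_nonneg hb (B.nonneg ω)]
  sum_one := by simp [Fintype.sum_sum_type, ← Finset.mul_sum, A.sum_one, B.sum_one, hab]
  tree := Sum.elim A.tree B.tree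

theorem expect_mix (A B : RandAlg ι α β) {a b : ℝ} (ha : 0 ≤ a) (hb : 0 ≤ b) (hab : a + b = 1)
    (F : DTree ι α β → ℝ) :
    (A.mix B ha hb hab).expect F = a * A.expect F + b * B.expect F := by
  simp only [expect, Finset.mul_sum, ← mul_assoc]
  exact Fintype.sum_sum_type _

theorem Computes.mix {A B : RandAlg ι α β} {f : PFn ι α β} {ε a b : ℝ} (hA : A.Computes f ε)
    (hB : B.Computes f ε) (ha : 0 ≤ a) (hb : 0 ≤ b) (hab : a + b = 1) :
    (A.mix B ha hb hab).Computes f ε := by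
  intro x c hx
  rw [succProb_eq_expect, expect_mix, ← succProb_eq_expect, ← succProb_eq_expect]
  calc 1 - ε = a * (1 - ε) + b * (1 - ε) := by rw [← add_mul, hab, one_mul]
    _ ≤ _ := add_le_add (mul_le_mul_of_nonneg_left (hA x c hx) ha)
        (mul_le_mul_of_nonneg_left (hB x c hx) hb)

theorem expCost_mix (A B : RandAlg ι α β) {a b : ℝ} (ha : 0 ≤ a) (hb : 0 ≤ b)
    (hab : a + b = 1) (x : ι → α) :
    (A.mix B ha hb hab).expCost x = a * A.expCost x + b * B.expCost x :=
  expect_mix A B ha hb hab fun t => t.cost x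

section pi

variable (κ : Type) [Fintype κ] [DecidableEq κ] [Inhabited β]

noncomputable def pi (A : RandAlg ι α β) : RandAlg (κ × ι) α (κ → β) where
  Ω := κ → A.Ω
  p v := ∏ i, A.p (v i)
  nonneg v := Finset.prod_nonneg fun i _ => A.nonneg (v i)
  sum_one := sum_prod_eq_one A.sum_one
  tree v := DTree.seq (fun i => A.tree (v i)) Finset.univ.toList default

theorem expect_pi (A : RandAlg ι α β) (F : DTree (κ × ι) α (κ → β) → ℝ) :
    (A.pi κ).expect F = ∑ v : κ → A.Ω,
      (∏ i, A.p (v i)) * F (DTree.seq (fun i => A.tree (v i)) Finset.univ.toList default) :=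
  rfl

theorem succProb_pi (A : RandAlg ι α β) (z : κ × ι → α) (g : κ → β) :
    (A.pi κ).succProb z g = ∏ i, A.succProb (Function.curry z i) (g i) := by
  classical
  rw [succProb_eq_expect, expect_pi]
  simp only [DTree.output_seq, Finset.mem_toList, Finset.mem_univ, if_true, funext_iff,
    ← Fintype.prod_boole, succProb_eq_expect, expect, Fintype.prod_sum, Finset.prod_mul_distrib]

theorem expCost_pi (A : RandAlg ι α β) (z : κ × ι → α) :
    (A.pi κ).expCost z = ∑ i, A.expCost (Function.curry z i) := by
  simp_rw [expCost_eq_expect, expect_pi, DTree.cost_seq, Finset.sum_map_toList, Nat.cast_sum,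
    Finset.mul_sum]
  rw [Finset.sum_comm]
  exact Finset.sum_congr rfl fun i _ =>
    sum_prod_mul_apply A.sum_one i fun ω => ((A.tree ω).cost (Function.curry z i) : ℝ)

end pi

section marginal

variable {κ : Type} [Fintype κ] [DecidableEq κ] [Fintype ι] [DecidableEq ι] [Fintype α]

noncomputable def marginal (A : RandAlg (κ × ι) α (κ → β)) {w : (ι → α) → ℝ}
    (hw : w ∈ stdSimplex ℝ (ι → α)) (i : κ) : RandAlg ι α β where
  Ω := A.Ω × (κ → ι → α)
  p ω := A.p ω.1 * ∏ j, w (ω.2 j)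
  nonneg ω := mul_nonneg (A.nonneg _) (Finset.prod_nonneg fun j _ => hw.1 _)
  sum_one := by
    simp [Fintype.sum_prod_type, ← Finset.mul_sum, sum_prod_eq_one hw.2, A.sum_one]
  tree ω := ((A.tree ω.1).restrict i ω.2).bind fun g => .leaf (g i)

theorem expect_marginal (A : RandAlg (κ × ι) α (κ → β)) {w : (ι → α) → ℝ}
    (hw : w ∈ stdSimplex ℝ (ι → α)) (i : κ) (F : DTree ι α β → ℝ) :
    (A.marginal hw i).expect F = ∑ y : κ → ι → α, (∏ j, w (y j)) *
      A.expect fun t => F ((t.restrict i y).bind fun g => .leaf (g i)) := by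
  change ∑ ω : A.Ω × (κ → ι → α), A.p ω.1 * (∏ j, w (ω.2 j)) *
    F (((A.tree ω.1).restrict i ω.2).bind fun g => .leaf (g i)) = _
  simp only [expect, Finset.mul_sum]
  rw [Fintype.sum_prod_type, Finset.sum_comm]
  exact Finset.sum_congr rfl fun y _ => Finset.sum_congr rfl fun ω _ => by ring

theorem sum_expCost_marginal (A : RandAlg (κ × ι) α (κ → β)) {w : (ι → α) → ℝ}
    (hw : w ∈ stdSimplex ℝ (ι → α)) (i : κ) :
    ∑ x, w x * (A.marginal hw i).expCost x
      = ∑ t : κ → ι → α, (∏ j, w (t j)) * A.expect fun s => s.costAt i (Function.uncurry t) := by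
  simp only [expCost_eq_expect, expect_marginal, DTree.cost_bind, DTree.cost_restrict,
    DTree.cost, add_zero]
  exact sum_mul_sum_prod_mul_update hw.2 i fun y => A.expect fun s => s.costAt i (Function.uncurry y)

theorem sum_sum_expCost_marginal (A : RandAlg (κ × ι) α (κ → β)) {w : (ι → α) → ℝ}
    (hw : w ∈ stdSimplex ℝ (ι → α)) :
    ∑ i, ∑ x, w x * (A.marginal hw i).expCost x
      = ∑ t : κ → ι → α, (∏ j, w (t j)) * A.expCost (Function.uncurry t) := by
  simp only [sum_expCost_marginal, expect]
  rw [Finset.sum_comm]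
  refine Finset.sum_congr rfl fun t _ => ?_
  rw [← Finset.mul_sum, Finset.sum_comm]
  simp only [← Finset.mul_sum, ← Nat.cast_sum, DTree.sum_costAt]
  rfl

end marginal

end RandAlg

section dsum

variable {ι α β : Type} {m : ℕ} {f : PFn ι α β}

theorem dsum_isSome_iff {z : Fin m × ι → α} :
    (dsum m f z).isSome ↔ ∀ i, (f (Function.curry z i)).isSome := by
  unfold dsum
  split_ifs with h
  · exact iff_of_true rfl h
  · exact iff_of_false (by simp) h

theorem dsum_eq_some {z : Fin m × ι → α} {g : Fin m → β} (hz : dsum m f z = some g) (i : Fin m) :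
    f (Function.curry z i) = some (g i) := by
  unfold dsum at hz
  split_ifs at hz with h
  cases hz
  exact (Option.some_get (h i)).symm

theorem RandAlg.Computes.pi {A : RandAlg ι α β} [Inhabited β] (hA : A.Computes f 0) :
    (A.pi (Fin m)).Computes (dsum m f) 0 := fun z g hz => by
  rw [sub_zero, RandAlg.succProb_pi]
  exact Finset.one_le_prod fun i _ => by simpa using hA _ _ (dsum_eq_some hz i)

theorem RandAlg.ECostLe.pi {A : RandAlg ι α β} [Inhabited β] {T : ℝ} (hA : A.ECostLe f T) :
    (A.pi (Fin m)).ECostLe (dsum m f) (m * T) := fun z hz => by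
  rw [RandAlg.expCost_pi]
  simpa using Finset.sum_le_sum (s := Finset.univ) fun i _ => hA _ (dsum_isSome_iff.1 hz i)

variable [Fintype ι] [DecidableEq ι] [Fintype α] {w : (ι → α) → ℝ}

theorem RandAlg.Computes.marginal {A : RandAlg (Fin m × ι) α (Fin m → β)} {ε : ℝ}
    (hA : A.Computes (dsum m f) ε) (hw : w ∈ stdSimplex ℝ (ι → α))
    (hdom : ∀ x, w x ≠ 0 → (f x).isSome) (i : Fin m) : (A.marginal hw i).Computes f ε := by
  classical
  intro x b hx
  rw [RandAlg.succProb_eq_expect, RandAlg.expect_marginal]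
  calc 1 - ε = ∑ y : Fin m → ι → α, (∏ j, w (y j)) * (1 - ε) := by
        rw [← Finset.sum_mul, sum_prod_eq_one hw.2, one_mul]
    _ ≤ _ := Finset.sum_le_sum fun y _ => ?_
  rcases eq_or_ne (∏ j, w (y j)) 0 with hy | hy
  · simp [hy]
  refine mul_le_mul_of_nonneg_left ?_ (Finset.prod_nonneg fun j _ => hw.1 _)
  set z := Function.uncurry (Function.update y i x)
  have hz : Function.curry z = Function.update y i x := Function.curry_uncurry _
  obtain ⟨g, hg⟩ := Option.isSome_iff_exists.1 <| (dsum_isSome_iff (f := f) (z := z)).2 fun j => by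
    rcases eq_or_ne j i with rfl | hj
    · simp [hz, hx]
    · simpa [hz, hj] using hdom _ (Finset.prod_ne_zero_iff.1 hy j (Finset.mem_univ j))
  have hgi : b = g i := by simpa [hz, hx] using dsum_eq_some hg i
  calc 1 - ε ≤ A.succProb _ g := hA _ g hg
    _ ≤ _ := by
      rw [RandAlg.succProb_eq_expect]
      refine A.expect_mono fun t => ?_
      simp only [DTree.output_bind, DTree.output_restrict, DTree.output]
      by_cases ht : t.output z = g
      · rw [if_pos ht, if_pos (show t.output z i = b by rw [ht, hgi])]
      · rw [if_neg ht]
        split_ifs <;> norm_num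

theorem sum_expCost_dsum_le {A : RandAlg (Fin m × ι) α (Fin m → β)} {T : ℝ}
    (hA : A.ECostLe (dsum m f) T) (hw : w ∈ stdSimplex ℝ (ι → α))
    (hdom : ∀ x, w x ≠ 0 → (f x).isSome) :
    ∑ t : Fin m → ι → α, (∏ i, w (t i)) * A.expCost (Function.uncurry t) ≤ T :=
  calc ∑ t : Fin m → ι → α, (∏ i, w (t i)) * A.expCost (Function.uncurry t)
      ≤ ∑ t : Fin m → ι → α, (∏ i, w (t i)) * T := Finset.sum_le_sum fun t _ => by
        rcases eq_or_ne (∏ i, w (t i)) 0 with ht | ht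
        · simp [ht]
        refine mul_le_mul_of_nonneg_left (hA _ (dsum_isSome_iff.2 fun i => ?_))
          (Finset.prod_nonneg fun i _ => hw.1 _)
        simpa using hdom _ (Finset.prod_ne_zero_iff.1 ht i (Finset.mem_univ i))
    _ = T := by rw [← Finset.sum_mul, sum_prod_eq_one hw.2, one_mul]

theorem mul_le_sum_expCost_dsum {A : RandAlg (Fin m × ι) α (Fin m → β)} {ε r : ℝ}
    (hA : A.Computes (dsum m f) ε) (hw : w ∈ stdSimplex ℝ (ι → α))
    (hdom : ∀ x, w x ≠ 0 → (f x).isSome)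
    (hard : ∀ B : RandAlg ι α β, B.Computes f ε → r ≤ ∑ x, w x * B.expCost x) :
    m * r ≤ ∑ t : Fin m → ι → α, (∏ i, w (t i)) * A.expCost (Function.uncurry t) :=
  calc (m : ℝ) * r = ∑ _i : Fin m, r := by simp
    _ ≤ ∑ i, ∑ x, w x * (A.marginal hw i).expCost x :=
        Finset.sum_le_sum fun i _ => hard _ (hA.marginal hw hdom i)
    _ = _ := A.sum_sum_expCost_marginal hw

end dsum

section Rbar

variable {ι α β : Type} {f : PFn ι α β} {ε : ℝ}

theorem Rbar_nonneg (ε : ℝ) (f : PFn ι α β) : 0 ≤ Rbar ε f :=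
  Real.sInf_nonneg fun _ hT => hT.1

theorem Rbar_le {A : RandAlg ι α β} {T : ℝ} (hA : A.Computes f ε) (hT : 0 ≤ T)
    (hAT : A.ECostLe f T) : Rbar ε f ≤ T :=
  csInf_le ⟨0, fun _ hT => hT.1⟩ ⟨hT, A, hA, hAT⟩

/-- Without outputs there are no algorithms at all, so `Rbar` is the junk value `sInf ∅ = 0`. -/
theorem Rbar_of_isEmpty [Nonempty α] [IsEmpty β] (ε : ℝ) (f : PFn ι α β) : Rbar ε f = 0 := by
  have : {T : ℝ | 0 ≤ T ∧ ∃ A : RandAlg ι α β, A.Computes f ε ∧ A.ECostLe f T} = ∅ :=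
    Set.eq_empty_of_forall_notMem fun _ ⟨_, A, _⟩ => not_nonempty_iff.2 ‹_› A.nonempty
  rw [Rbar, this, Real.sInf_empty]

theorem exists_computes_zero_expCost_le_card [Fintype ι] [Nonempty α] [Nonempty β]
    (f : PFn ι α β) : ∃ A : RandAlg ι α β, A.Computes f 0 ∧ ∀ x, A.expCost x ≤ Fintype.card ι := by
  classical
  obtain ⟨b⟩ := ‹Nonempty β›
  obtain ⟨a⟩ := ‹Nonempty α›
  let t := DTree.queryAll (fun x => (f x).getD b) Finset.univ.toList fun _ => a
  refine ⟨.pure t, fun x c hx => ?_, fun x => ?_⟩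
  · rw [RandAlg.succProb_eq_expect, RandAlg.expect_pure,
      DTree.output_queryAll _ _ _ _ fun j hj => absurd (by simp) hj]
    simp [hx]
  · simp [RandAlg.expCost_eq_expect, t, DTree.cost_queryAll]

theorem le_Rbar [Fintype ι] [Nonempty α] [Nonempty β] {r : ℝ} (hε : 0 ≤ ε)
    (h : ∀ (A : RandAlg ι α β) (T : ℝ), A.Computes f ε → A.ECostLe f T → r ≤ T) :
    r ≤ Rbar ε f := by
  obtain ⟨A, hA, hAc⟩ := exists_computes_zero_expCost_le_card f
  exact le_csInf ⟨_, Nat.cast_nonneg _, A, hA.mono hε, fun x _ => hAc x⟩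
    fun T ⟨_, A, hA, hAT⟩ => h A T hA hAT

/-- Yao's minimax principle for `R̄_ε`. -/
theorem exists_hard_weights [Fintype ι] [DecidableEq ι] [Fintype α] [Nonempty α] [Nonempty β]
    (hε : 0 ≤ ε) (hdom : ∃ x, (f x).isSome) :
    ∃ w ∈ stdSimplex ℝ (ι → α), (∀ x, w x ≠ 0 → (f x).isSome) ∧
      ∀ A : RandAlg ι α β, A.Computes f ε → Rbar ε f ≤ ∑ x, w x * A.expCost x := by
  let K : Set ((ι → α) → ℝ) := {c | ∃ A : RandAlg ι α β, A.Computes f ε ∧ ∀ x, A.expCost x ≤ c x}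
  have hKc : Convex ℝ K := by
    rintro c ⟨A, hA, hAc⟩ d ⟨B, hB, hBd⟩ a b ha hb hab
    refine ⟨A.mix B ha hb hab, hA.mix hB ha hb hab, fun x => ?_⟩
    rw [RandAlg.expCost_mix]
    exact add_le_add (mul_le_mul_of_nonneg_left (hAc x) ha) (mul_le_mul_of_nonneg_left (hBd x) hb)
  have hKne : K.Nonempty :=
    let ⟨A, hA, _⟩ := exists_computes_zero_expCost_le_card f
    ⟨_, A, hA.mono hε, fun _ => le_rfl⟩
  have hv : ∀ c ∈ K, ∃ x ∈ {x | (f x).isSome}, Rbar ε f ≤ c x := by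
    rintro c ⟨A, hA, hAc⟩
    let D := Finset.univ.filter fun x => (f x).isSome
    obtain ⟨x₀, hx₀, hmax⟩ := D.exists_max_image c (let ⟨x, hx⟩ := hdom; ⟨x, by simpa [D] using hx⟩)
    refine ⟨x₀, by simpa [D] using hx₀, Rbar_le hA ((A.expCost_nonneg x₀).trans (hAc x₀)) ?_⟩
    exact fun x hx => (hAc x).trans (hmax x (by simpa [D] using hx))
  obtain ⟨w, hw, hw0, hwK⟩ := exists_mem_stdSimplex_forall_le_sum_mul hKc hKne hv
  exact ⟨w, hw, fun x hx => Classical.byContradiction fun h => hx (hw0 x h),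
    fun A hA => hwK _ ⟨A, hA, fun _ => le_rfl⟩⟩

end Rbar

section directSum

variable {ι α β : Type} [Fintype ι] [Nonempty α] [Nonempty β]

theorem R0_dsum_le (f : PFn ι α β) (m : ℕ) : R0 (dsum m f) ≤ m * R0 f := by
  inhabit β
  obtain ⟨A₀, hA₀, hA₀c⟩ := exists_computes_zero_expCost_le_card f
  rw [R0, R0, Rbar, Rbar, ← smul_eq_mul, ← Real.sInf_smul_of_nonneg (Nat.cast_nonneg m)]
  refine le_csInf ⟨_, Set.smul_mem_smul_set ⟨Nat.cast_nonneg _, A₀, hA₀, fun x _ => hA₀c x⟩⟩ ?_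
  rintro _ ⟨T, ⟨hT, A, hA, hAT⟩, rfl⟩
  exact Rbar_le hA.pi (by positivity) hAT.pi

theorem mul_Rbar_le_Rbar_dsum [Fintype α] (f : PFn ι α β) (m : ℕ) {ε : ℝ} (hε : 0 ≤ ε) :
    m * Rbar ε f ≤ Rbar ε (dsum m f) := by
  classical
  rcases isEmpty_or_nonempty {x // (f x).isSome} with hdom | ⟨⟨x₀, hx₀⟩⟩
  · obtain ⟨b⟩ := ‹Nonempty β›
    have : Rbar ε f ≤ 0 := Rbar_le (A := .pure (.leaf b)) (fun x _ hx => hdom.elim ⟨x, by simp [hx]⟩)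
      le_rfl fun x hx => hdom.elim ⟨x, hx⟩
    rw [le_antisymm this (Rbar_nonneg ε f), mul_zero]
    exact Rbar_nonneg ε _
  obtain ⟨w, hw, hdom, hard⟩ := exists_hard_weights hε ⟨x₀, hx₀⟩
  exact le_Rbar hε fun A T hA hAT =>
    (mul_le_sum_expCost_dsum hA hw hdom hard).trans (sum_expCost_dsum_le hAT hw hdom)

end directSum

namespace FinDist

variable {γ : Type} (μ : FinDist γ)

theorem mem_support_of_p_ne_zero {x : γ} (hx : μ.p x ≠ 0) : x ∈ μ.support :=
  by_contra fun h => hx (μ.zero_off x h)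

variable [Fintype γ]

theorem p_mem_stdSimplex : μ.p ∈ stdSimplex ℝ γ :=
  ⟨μ.nonneg, μ.sum_one ▸ (Finset.sum_subset (Finset.subset_univ _) fun x _ => μ.zero_off x).symm⟩

theorem sum_support_mul (g : γ → ℝ) : ∑ x ∈ μ.support, μ.p x * g x = ∑ x, μ.p x * g x :=
  Finset.sum_subset (Finset.subset_univ _) fun x _ hx => by simp [μ.zero_off x hx]

theorem sum_piFinset_support_mul {κ : Type} [Fintype κ] [DecidableEq κ] (g : (κ → γ) → ℝ) :
    ∑ t ∈ Fintype.piFinset fun _ : κ => μ.support, (∏ i, μ.p (t i)) * g t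
      = ∑ t, (∏ i, μ.p (t i)) * g t :=
  Finset.sum_subset (Finset.subset_univ _) fun t _ ht => by
    obtain ⟨i, hi⟩ : ∃ i, t i ∉ μ.support := by simpa [Fintype.mem_piFinset] using ht
    simp [Finset.prod_eq_zero (f := fun i => μ.p (t i)) (Finset.mem_univ i) (μ.zero_off _ hi)]

end FinDist

theorem IsHardDist.mul_R0_le_sum_expCost_dsum {ι α β : Type} [Fintype ι] [DecidableEq ι]
    [Fintype α] {f : PFn ι α β} {μ : FinDist (ι → α)} (hμ : IsHardDist μ f) {m : ℕ}
    {A : RandAlg (Fin m × ι) α (Fin m → β)} (hA : A.Computes (dsum m f) 0) :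
    m * R0 f ≤ ∑ t ∈ Fintype.piFinset (fun _ : Fin m => μ.support),
      (∏ i, μ.p (t i)) * A.expCost (Function.uncurry t) := by
  rw [μ.sum_piFinset_support_mul]
  refine mul_le_sum_expCost_dsum hA μ.p_mem_stdSimplex
    (fun x hx => hμ.1 x (μ.mem_support_of_p_ne_zero hx)) fun B hB => ?_
  rw [← μ.sum_support_mul]
  exact hμ.2 B hB

/-- **Direct sum theorem.** For any `n`-bit partial function `f` and positive integer
`m`: `R₀(f^{⊕m}) = m · R₀(f)`; moreover, if `μ` is a hard distribution for `f`, then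
`μ^{⊗m}` is a hard distribution for `f^{⊕m}` (every zero-error algorithm for `f^{⊕m}`
makes at least `m · R₀(f)` expected queries on inputs drawn from `μ^{⊗m}`); and for
every `ε ∈ [0, 1/2)`, `R̄_ε(f^{⊕m}) ≥ m · R̄_ε(f)`. -/
theorem direct_sum_zero_error {n : ℕ} {β : Type} (f : PFn (Fin n) Bool β)
    (m : ℕ) (hm : 0 < m) :
    R0 (dsum m f) = (m : ℝ) * R0 f ∧
    (∀ μ : FinDist (Fin n → Bool), IsHardDist μ f →
      ∀ A : RandAlg (Fin m × Fin n) Bool (Fin m → β), A.Computes (dsum m f) 0 →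
        (m : ℝ) * R0 f ≤
          ∑ t ∈ Fintype.piFinset (fun _ : Fin m => μ.support),
            (∏ i, μ.p (t i)) * A.expCost fun q => t q.1 q.2) ∧
    (∀ ε : ℝ, 0 ≤ ε → ε < 1/2 → (m : ℝ) * Rbar ε f ≤ Rbar ε (dsum m f)) := by
  rcases isEmpty_or_nonempty β with hβ | hβ
  · have : IsEmpty (Fin m → β) := ⟨fun g => isEmptyElim (g ⟨0, hm⟩)⟩
    exact ⟨by simp [R0, Rbar_of_isEmpty], fun μ hμ A hA => hμ.mul_R0_le_sum_expCost_dsum hA,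
      fun ε _ _ => by simp [Rbar_of_isEmpty]⟩
  · exact ⟨le_antisymm (R0_dsum_le f m) (mul_Rbar_le_Rbar_dsum f m le_rfl),
      fun μ hμ A hA => hμ.mul_R0_le_sum_expCost_dsum hA, fun ε hε _ => mul_Rbar_le_Rbar_dsum f m hε⟩
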